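/- For every integer n ≥ 2, the unique real root λ > 1 of p_n(x) = x^{2n} - 2(x + x^2 + ... + x^{2n-1}) + 1 is a Salem number, i.e., all other complex roots of p_n have absolute value at most 1 and at least one root lies on the unit circle. -/

import Mathlib

/-!
Multiplying by `z - 1` turns `p_n` into `Q(z) = z^(2n+1) - 3 z^(2n) + 3 z - 1`, which satisfies
`z^(2n+1) Q(1/z) = -Q(z)`; hence `p_n` is reciprocal and `λ⁻¹` is a root too. On the unit circle
`Q(e^(2iw)) = 2i e^((2n+1)iw) (sin((2n+1)w) - 3 sin((2n-1)w))`. The trigonometric factor alternates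
in sign at the points `kπ/(2n+1)`, `1 ≤ k ≤ n`, and is invariant under `w ↦ π - w`, so it has
`2n - 2` zeros in `(0, π)`, giving `2n - 2` distinct roots of `p_n` on the unit circle. With `λ` and
`λ⁻¹` these are `2n = deg p_n` roots, hence all of them.
-/

open Polynomial Real Set

theorem exists_mem_Ioo_eq_zero_of_mul_neg {f : ℝ → ℝ} {a b : ℝ} (hab : a ≤ b)
    (hf : ContinuousOn f (Icc a b)) (h : f a * f b < 0) : ∃ x ∈ Ioo a b, f x = 0 := by
  rcases mul_neg_iff.mp h with ⟨ha, hb⟩ | ⟨ha, hb⟩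
  · exact intermediate_value_Ioo' hab hf ⟨hb, ha⟩
  · exact intermediate_value_Ioo hab hf ⟨ha, hb⟩

theorem exists_finset_zeros_of_sign_changes {f : ℝ → ℝ} (hf : Continuous f) {a : ℕ → ℝ}
    (ha : Monotone a) {N : ℕ} (hsign : ∀ j < N, f (a j) * f (a (j + 1)) < 0) :
    ∃ s : Finset ℝ, s.card = N ∧ ∀ x ∈ s, x ∈ Ioo (a 0) (a N) ∧ f x = 0 := by
  induction N with
  | zero => exact ⟨∅, rfl, by simp⟩
  | succ N ih =>
    obtain ⟨s, hcard, hs⟩ := ih fun j hj => hsign j (by omega)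
    obtain ⟨x, hx, hfx⟩ := exists_mem_Ioo_eq_zero_of_mul_neg (ha N.le_succ) hf.continuousOn
      (hsign N N.lt_succ_self)
    have hxs : x ∉ s := fun hmem => (hs x hmem).1.2.not_gt hx.1
    refine ⟨insert x s, by rw [Finset.card_insert_of_notMem hxs, hcard], ?_⟩
    intro y hy
    rcases Finset.mem_insert.mp hy with rfl | hy
    · exact ⟨⟨(ha N.zero_le).trans_lt hx.1, hx.2⟩, hfx⟩
    · exact ⟨⟨(hs y hy).1.1, (hs y hy).1.2.trans_le (ha N.le_succ)⟩, (hs y hy).2⟩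

theorem Polynomial.rootSet_eq_of_natDegree_le_card {R S : Type*} [CommRing R] [CommRing S]
    [IsDomain S] [Algebra R S] {p : R[X]} (hp : p.map (algebraMap R S) ≠ 0) {s : Finset S}
    (hs : ∀ x ∈ s, aeval x p = 0) (hcard : p.natDegree ≤ s.card) : p.rootSet S = s := by
  have hsub : (s : Set S) ⊆ p.rootSet S := fun x hx => mem_rootSet'.mpr ⟨hp, hs x hx⟩
  refine (Set.eq_of_subset_of_ncard_le hsub ?_ (p.rootSet_finite S)).symm
  rw [Set.ncard_coe_finset]
  exact (p.ncard_rootSet_le S).trans hcard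

theorem injOn_exp_two_mul_I : InjOn (fun w : ℝ => Complex.exp (2 * w * Complex.I)) (Ico 0 π) := by
  intro x ⟨hx0, hx1⟩ y ⟨hy0, hy1⟩ h
  have h2 : 2 * x = 2 * y := by
    refine Circle.exp_injOn_Ico (a := 0) (b := 2 * π) (by simp) ⟨by linarith, by linarith⟩
      ⟨by linarith, by linarith⟩ (Subtype.ext ?_)
    simpa [Circle.coe_exp] using h
  linarith

noncomputable def salemPoly (n : ℕ) : ℤ[X] :=
  X ^ (2 * n) - 2 * ∑ j ∈ Finset.Icc 1 (2 * n - 1), X ^ j + 1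

def salemQ {A : Type*} [CommRing A] (n : ℕ) (z : A) : A :=
  z ^ (2 * n + 1) - 3 * z ^ (2 * n) + 3 * z - 1

theorem sub_one_mul_aeval_salemPoly {A : Type*} [CommRing A] {n : ℕ} (hn : 1 ≤ n) (z : A) :
    (z - 1) * aeval z (salemPoly n) = salemQ n z := by
  have hgeom : (∑ j ∈ Finset.Icc 1 (2 * n - 1), z ^ j) * (z - 1) = z ^ (2 * n) - z := by
    rw [← Finset.Ico_add_one_right_eq_Icc, Nat.sub_add_cancel (by omega),
      geom_sum_Ico_mul _ (by omega), pow_one]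
  simp only [salemPoly, salemQ, map_add, map_sub, map_mul, map_sum, map_pow, aeval_X, map_one,
    map_ofNat]
  linear_combination (-2) * hgeom

theorem pow_mul_aeval_inv_salemPoly {K : Type*} [Field K] {n : ℕ} (hn : 1 ≤ n) {z : K}
    (hz : z ≠ 0) : z ^ (2 * n) * aeval z⁻¹ (salemPoly n) = aeval z (salemPoly n) := by
  rcases eq_or_ne z 1 with rfl | hz1
  · simp
  refine mul_left_cancel₀ (sub_ne_zero.mpr hz1) ?_
  have hk (k : ℕ) : z ^ k * z⁻¹ ^ k = 1 := by rw [← mul_pow, mul_inv_cancel₀ hz, one_pow]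
  have h := sub_one_mul_aeval_salemPoly hn z
  have h' := sub_one_mul_aeval_salemPoly hn z⁻¹
  simp only [salemQ] at h h'
  -- `z ^ (2n+1) * Q z⁻¹ = -Q z`, after clearing `z * z⁻¹ = 1`
  linear_combination -z ^ (2 * n + 1) * h' - h + z ^ (2 * n) * aeval z⁻¹ (salemPoly n) * hk 1
    - hk (2 * n + 1) + 3 * z * hk (2 * n) - 3 * z ^ (2 * n) * hk 1

noncomputable def salemTrig (n : ℕ) (w : ℝ) : ℝ :=
  sin ((2 * n + 1) * w) - 3 * sin ((2 * n - 1) * w)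

theorem continuous_salemTrig (n : ℕ) : Continuous (salemTrig n) := by
  unfold salemTrig; fun_prop

theorem salemQ_exp_two_mul_I (n : ℕ) (w : ℝ) :
    salemQ n (Complex.exp (2 * w * Complex.I)) =
      2 * Complex.I * Complex.exp ((2 * n + 1) * w * Complex.I) * salemTrig n w := by
  have hsin (x : ℝ) : (sin x : ℂ) =
      ((Complex.exp (x * Complex.I))⁻¹ - Complex.exp (x * Complex.I)) * Complex.I / 2 := by
    rw [Complex.ofReal_sin, Complex.sin, ← Complex.exp_neg]; ring_nf
  rw [salemQ, salemTrig, Complex.ofReal_sub, Complex.ofReal_mul 3, hsin, hsin]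
  push_cast
  set A := Complex.exp ((2 * n + 1) * w * Complex.I)
  set B := Complex.exp ((2 * n - 1) * w * Complex.I)
  set C := Complex.exp (2 * w * Complex.I)
  have hA : C ^ (2 * n + 1) = A ^ 2 := by
    simp only [A, C, ← Complex.exp_nat_mul]; push_cast; ring_nf
  have hAB : C ^ (2 * n) = A * B := by
    simp only [A, B, C, ← Complex.exp_nat_mul, ← Complex.exp_add]; push_cast; ring_nf
  have hBC : A = B * C := by
    simp only [A, B, C, ← Complex.exp_add]; ring_nf
  have hB0 : B ≠ 0 := Complex.exp_ne_zero _
  have hC0 : C ≠ 0 := Complex.exp_ne_zero _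
  rw [hA, hAB]
  clear_value A B C
  subst hBC
  field_simp
  linear_combination (C ^ 2 * B ^ 2 - 3 * C * B ^ 2 + 3 * C - 1) * Complex.I_sq

theorem salemTrig_pi_sub (n : ℕ) (w : ℝ) : salemTrig n (π - w) = salemTrig n w := by
  have hodd (k : ℤ) (hk : Odd k) (x : ℝ) : sin (k * (π - x)) = sin (k * x) := by
    rw [mul_sub, mul_comm (k : ℝ) π, ← mul_comm, sin_int_mul_pi_sub, hk.neg_one_zpow]; ring
  have h1 := hodd (2 * n + 1) (by simp [parity_simps]) w
  have h2 := hodd (2 * n - 1) (by simp [parity_simps]) w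
  push_cast at h1 h2
  rw [salemTrig, salemTrig, h1, h2]

theorem salemTrig_nat_mul_pi_div (n k : ℕ) :
    salemTrig n (k * π / (2 * n + 1)) = 3 * (-1) ^ k * sin (2 * k * π / (2 * n + 1)) := by
  have hd : (2 * n + 1 : ℝ) ≠ 0 := by positivity
  have h1 : (2 * n + 1) * (k * π / (2 * n + 1)) = k * π := by field_simp
  have h2 : (2 * n - 1) * (k * π / (2 * n + 1)) = k * π - 2 * k * π / (2 * n + 1) := by
    field_simp; ring
  rw [salemTrig, h1, h2, sin_nat_mul_pi, sin_nat_mul_pi_sub]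
  ring

theorem exists_finset_salemTrig_zeros_Ioo_zero_pi_div_two {n : ℕ} (hn : 1 ≤ n) :
    ∃ s : Finset ℝ, s.card = n - 1 ∧ ∀ w ∈ s, w ∈ Ioo 0 (π / 2) ∧ salemTrig n w = 0 := by
  have hd : (0 : ℝ) < 2 * n + 1 := by positivity
  have hsin_pos {k : ℕ} (hk : 1 ≤ k) (hkn : k ≤ n) : 0 < sin (2 * k * π / (2 * n + 1)) := by
    have hk' : (1 : ℝ) ≤ k := by exact_mod_cast hk
    have hkn' : (k : ℝ) ≤ n := by exact_mod_cast hkn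
    refine sin_pos_of_pos_of_lt_pi (by positivity) ?_
    rw [div_lt_iff₀ hd]
    nlinarith [pi_pos]
  set a : ℕ → ℝ := fun j => ((j + 1 : ℕ) : ℝ) * π / (2 * n + 1)
  have ha : Monotone a := fun i j hij => by simp only [a]; gcongr
  have hsign : ∀ j < n - 1, salemTrig n (a j) * salemTrig n (a (j + 1)) < 0 := by
    intro j hj
    have hodd : (-1 : ℝ) ^ (j + 1) * (-1) ^ (j + 1 + 1) = -1 := by
      rw [← pow_add]; exact Odd.neg_one_pow ⟨j + 1, by ring⟩
    have h1 := hsin_pos (k := j + 1) (by omega) (by omega)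
    have h2 := hsin_pos (k := j + 1 + 1) (by omega) (by omega)
    simp only [a, salemTrig_nat_mul_pi_div]
    calc _ = 9 * ((-1) ^ (j + 1) * (-1) ^ (j + 1 + 1)) * (sin (2 * ↑(j + 1) * π / (2 * n + 1)) *
          sin (2 * ↑(j + 1 + 1) * π / (2 * n + 1))) := by ring
      _ < 0 := by rw [hodd]; linarith [mul_pos h1 h2]
  obtain ⟨s, hcard, hs⟩ := exists_finset_zeros_of_sign_changes (continuous_salemTrig n) ha hsign
  refine ⟨s, hcard, fun w hw => ⟨⟨?_, ?_⟩, (hs w hw).2⟩⟩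
  · exact lt_trans (by positivity) (hs w hw).1.1
  · refine (hs w hw).1.2.trans_le ?_
    simp only [a, Nat.sub_add_cancel hn]
    rw [div_le_iff₀ hd]
    nlinarith [pi_pos]

theorem exists_finset_salemTrig_zeros {n : ℕ} (hn : 1 ≤ n) :
    ∃ s : Finset ℝ, s.card = 2 * n - 2 ∧ ∀ w ∈ s, w ∈ Ioo 0 π ∧ salemTrig n w = 0 := by
  obtain ⟨s, hcard, hs⟩ := exists_finset_salemTrig_zeros_Ioo_zero_pi_div_two hn
  have hdisj : Disjoint s (s.image (π - ·)) := by
    refine Finset.disjoint_left.mpr fun w hw hw' => ?_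
    obtain ⟨v, hv, rfl⟩ := Finset.mem_image.mp hw'
    linarith [(hs _ hw).1.2, (hs v hv).1.2]
  refine ⟨s ∪ s.image (π - ·), ?_, fun w hw => ?_⟩
  · rw [Finset.card_union_of_disjoint hdisj, Finset.card_image_of_injective _ sub_right_injective,
      hcard]
    omega
  rcases Finset.mem_union.mp hw with hw | hw
  · exact ⟨⟨(hs w hw).1.1, (hs w hw).1.2.trans (by linarith [pi_pos])⟩, (hs w hw).2⟩
  · obtain ⟨v, hv, rfl⟩ := Finset.mem_image.mp hw
    obtain ⟨⟨hv0, hv1⟩, hgv⟩ := hs v hv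
    exact ⟨⟨by linarith, by linarith⟩, by rw [salemTrig_pi_sub, hgv]⟩

theorem exists_finset_unit_circle_roots_salemPoly {n : ℕ} (hn : 1 ≤ n) :
    ∃ U : Finset ℂ, U.card = 2 * n - 2 ∧ ∀ z ∈ U, ‖z‖ = 1 ∧ aeval z (salemPoly n) = 0 := by
  obtain ⟨s, hcard, hs⟩ := exists_finset_salemTrig_zeros hn
  refine ⟨s.image fun w : ℝ => Complex.exp (2 * w * Complex.I), ?_, ?_⟩
  · rw [Finset.card_image_of_injOn
      (injOn_exp_two_mul_I.mono fun w hw => Ioo_subset_Ico_self (hs w hw).1), hcard]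
  simp only [Finset.mem_image]
  rintro _ ⟨w, hw, rfl⟩
  obtain ⟨⟨hw0, hwπ⟩, hgw⟩ := hs w hw
  refine ⟨by simpa using Complex.norm_exp_ofReal_mul_I (2 * w), ?_⟩
  have hne : Complex.exp (2 * w * Complex.I) ≠ 1 := fun h =>
    hw0.ne' (injOn_exp_two_mul_I ⟨hw0.le, hwπ⟩ ⟨le_rfl, pi_pos⟩ (by simpa using h))
  have h := sub_one_mul_aeval_salemPoly hn (Complex.exp (2 * w * Complex.I))
  rw [salemQ_exp_two_mul_I, hgw, Complex.ofReal_zero, mul_zero] at h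
  exact (mul_eq_zero.mp h).resolve_left (sub_ne_zero.mpr hne)

theorem natDegree_salemPoly_le (n : ℕ) : (salemPoly n).natDegree ≤ 2 * n := by
  unfold salemPoly
  compute_degree
  refine max_le le_rfl (natDegree_sum_le_of_forall_le _ _ fun j hj => ?_)
  rw [natDegree_X_pow]
  have := (Finset.mem_Icc.mp hj).2
  omega

theorem map_salemPoly_ne_zero {A : Type*} [CommRing A] [Nontrivial A] {n : ℕ} (hn : 1 ≤ n) :
    (salemPoly n).map (algebraMap ℤ A) ≠ 0 := by
  intro h
  have h0 := sub_one_mul_aeval_salemPoly hn (0 : A)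
  rw [aeval_def, eval₂_eq_eval_map, h, eval_zero, mul_zero, salemQ] at h0
  simp [show n ≠ 0 by omega] at h0

theorem exists_rootSet_salemPoly_eq {n : ℕ} (hn : 1 ≤ n) {μ : ℂ} (hμ : 1 < ‖μ‖)
    (hroot : aeval μ (salemPoly n) = 0) :
    ∃ U : Finset ℂ, U.card = 2 * n - 2 ∧ (∀ z ∈ U, ‖z‖ = 1) ∧
      (salemPoly n).rootSet ℂ = ↑(insert μ (insert μ⁻¹ U)) := by
  have hμ0 : μ ≠ 0 := norm_pos_iff.mp (one_pos.trans hμ)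
  have hnorm_inv : ‖μ⁻¹‖ < 1 := by rw [norm_inv]; exact inv_lt_one_of_one_lt₀ hμ
  have hroot_inv : aeval μ⁻¹ (salemPoly n) = 0 :=
    (mul_eq_zero.mp ((pow_mul_aeval_inv_salemPoly hn hμ0).trans hroot)).resolve_left
      (pow_ne_zero _ hμ0)
  obtain ⟨U, hUcard, hU⟩ := exists_finset_unit_circle_roots_salemPoly hn
  have hinv_notMem : μ⁻¹ ∉ U := fun h => by linarith [(hU _ h).1]
  have hμ_notMem : μ ∉ insert μ⁻¹ U := by
    rw [Finset.mem_insert, not_or]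
    exact ⟨fun h => by linarith [congrArg norm h], fun h => by linarith [(hU _ h).1]⟩
  refine ⟨U, hUcard, fun z hz => (hU z hz).1, ?_⟩
  refine rootSet_eq_of_natDegree_le_card (map_salemPoly_ne_zero hn) ?_ ?_
  · simp only [Finset.mem_insert]
    rintro z (rfl | rfl | hz)
    exacts [hroot, hroot_inv, (hU z hz).2]
  · rw [Finset.card_insert_of_notMem hμ_notMem, Finset.card_insert_of_notMem hinv_notMem, hUcard]
    have := natDegree_salemPoly_le n
    omega

theorem salem (n : ℕ) (hn : 2 ≤ n) (lam : ℝ) (hlam : 1 < lam)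
    (hroot : aeval lam ((X ^ (2 * n) - 2 * ∑ j ∈ Finset.Icc 1 (2 * n - 1), X ^ j + 1 : ℤ[X])) = 0) :
    (∀ z : ℂ, aeval z ((X ^ (2 * n) - 2 * ∑ j ∈ Finset.Icc 1 (2 * n - 1), X ^ j + 1 : ℤ[X])) = 0 →
        z ≠ (lam : ℂ) → ‖z‖ ≤ 1) ∧
      ∃ z : ℂ, aeval z ((X ^ (2 * n) - 2 * ∑ j ∈ Finset.Icc 1 (2 * n - 1), X ^ j + 1 : ℤ[X])) = 0 ∧
        ‖z‖ = 1 := by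
  have hn1 : 1 ≤ n := by omega
  have hnorm : 1 < ‖(lam : ℂ)‖ := by
    rwa [Complex.norm_real, Real.norm_of_nonneg (by positivity)]
  have hroot_lam : aeval (lam : ℂ) (salemPoly n) = 0 := by
    rw [← Complex.coe_algebraMap, aeval_algebraMap_apply, salemPoly, hroot, map_zero]
  obtain ⟨U, hUcard, hU, hroots⟩ := exists_rootSet_salemPoly_eq hn1 hnorm hroot_lam
  have hmem {z : ℂ} (hz : aeval z (salemPoly n) = 0) :
      z ∈ insert (lam : ℂ) (insert (lam : ℂ)⁻¹ U) := by
    rw [← Finset.mem_coe, ← hroots]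
    exact mem_rootSet'.mpr ⟨map_salemPoly_ne_zero hn1, hz⟩
  refine ⟨fun z hz hz_lam => ?_, ?_⟩
  · rcases Finset.mem_insert.mp (hmem hz) with rfl | hz'
    · exact absurd rfl hz_lam
    rcases Finset.mem_insert.mp hz' with rfl | hzU
    exacts [by rw [norm_inv]; exact inv_le_one_of_one_le₀ hnorm.le, (hU z hzU).le]
  · obtain ⟨z, hz⟩ : U.Nonempty := Finset.card_pos.mp (by omega)
    have hz' : z ∈ (salemPoly n).rootSet ℂ := by rw [hroots]; simp [hz]
    exact ⟨z, (mem_rootSet'.mp hz').2, hU z hz⟩
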